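/- arXiv:2006.04571 — 5 statements merged into one kernel-verified Lean document; each statement's English description precedes it below -/
import Mathlib

section
/- For every real symmetric n×n matrix L and every k with 2 ≤ k ≤ n, the k-th level exact subgraph Max-Cut bound satisfies z^k_mc ≤ z^{k-1}_mc, where z^k_mc = sup{⟨L,X⟩ : X ∈ X^E and X_I ∈ CUT_k for every I ⊆ {1,…,n} with |I| = k}. -/
/-!
Every `k`-subset of `n > k` indices extends to a `(k + 1)`-subset, and the principal submatrices of
a point of a cut polytope lie in the smaller cut polytope (a linear image of a convex hull is the
convex hull of the image). So the feasible region of level `k + 1` lies inside that of level `k`,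
and the supremum can only drop. Both suprema are genuine (not the junk value of `sSup`): every
feasible region contains the all-ones matrix, and `⟨L, X⟩` is bounded on `X^E` because a positive
semidefinite matrix with unit diagonal has its entries in `[-1, 1]`.
-/

open Matrix BigOperators

noncomputable section

/-- Frobenius inner product `⟨A,B⟩ = trace(AB)`. -/
def frob {n : ℕ} (A B : Matrix (Fin n) (Fin n) ℝ) : ℝ := (A * B).trace

/-- `c` is a ±1 vector. -/
def isPM1 {n : ℕ} (c : Fin n → ℝ) : Prop := ∀ i, c i = 1 ∨ c i = -1

/-- The cut polytope: convex hull of the cut matrices `c cᵀ` with `c ∈ {-1,1}ⁿ`. -/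
def CUT (n : ℕ) : Set (Matrix (Fin n) (Fin n) ℝ) :=
  convexHull ℝ {M | ∃ c : Fin n → ℝ, isPM1 c ∧ M = Matrix.vecMulVec c c}

/-- The spectrahedron `X^E`: matrices with unit diagonal that are positive semidefinite. -/
def XE (n : ℕ) : Set (Matrix (Fin n) (Fin n) ℝ) :=
  {X | (∀ i, X i i = 1) ∧ X.PosSemidef}

/-- The `k`-th level exact subgraph Max-Cut bound: subsets `I` of cardinality `k`
are represented by injective maps `f : Fin k → Fin n`. -/
def zLevel (n : ℕ) (L : Matrix (Fin n) (Fin n) ℝ) (k : ℕ) : ℝ :=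
  sSup {z : ℝ | ∃ X ∈ XE n,
    (∀ f : Fin k → Fin n, Function.Injective f → X.submatrix f f ∈ CUT k) ∧ z = frob L X}

lemma Matrix.PosSemidef.two_mul_abs_apply_le {ι : Type*} [Fintype ι] {X : Matrix ι ι ℝ}
    (hX : X.PosSemidef) (i j : ι) : 2 * |X i j| ≤ X i i + X j j := by
  classical
  have hsymm : X j i = X i j := by simpa using hX.isHermitian.apply i j
  have hform (s : ℝ) : 0 ≤ X i i + 2 * s * X i j + s ^ 2 * X j j := by
    have h := hX.dotProduct_mulVec_nonneg (Pi.single i 1 + Pi.single j s)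
    simp only [star_trivial, mulVec_add, mulVec_single, MulOpposite.op_one, one_smul,
      op_smul_eq_smul, dotProduct_add, add_dotProduct, single_dotProduct, col_apply, one_mul,
      hsymm, dotProduct_smul, smul_eq_mul] at h
    linarith
  have hplus := hform 1
  have hminus := hform (-1)
  rcases abs_cases (X i j) with ⟨habs, -⟩ | ⟨habs, -⟩ <;> rw [habs] <;> linarith

lemma abs_apply_le_one_of_mem_XE {n : ℕ} {X : Matrix (Fin n) (Fin n) ℝ} (hX : X ∈ XE n)
    (i j : Fin n) : |X i j| ≤ 1 := by
  have h := hX.2.two_mul_abs_apply_le i j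
  rw [hX.1 i, hX.1 j] at h
  linarith

lemma frob_le_sum_abs_of_mem_XE {n : ℕ} (L : Matrix (Fin n) (Fin n) ℝ)
    {X : Matrix (Fin n) (Fin n) ℝ} (hX : X ∈ XE n) : frob L X ≤ ∑ i, ∑ j, |L i j| := by
  simp only [frob, trace, diag, mul_apply]
  refine Finset.sum_le_sum fun i _ => Finset.sum_le_sum fun j _ => ?_
  calc L i j * X j i ≤ |L i j| * |X j i| := (le_abs_self _).trans (abs_mul _ _).le
    _ ≤ |L i j| := mul_le_of_le_one_right (abs_nonneg _) (abs_apply_le_one_of_mem_XE hX j i)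

lemma submatrix_mem_CUT {k m : ℕ} (e : Fin m → Fin k) {Y : Matrix (Fin k) (Fin k) ℝ}
    (hY : Y ∈ CUT k) : Y.submatrix e e ∈ CUT m := by
  let restrict : Matrix (Fin k) (Fin k) ℝ →ₗ[ℝ] Matrix (Fin m) (Fin m) ℝ :=
    { toFun := fun Y => Y.submatrix e e, map_add' := fun _ _ => rfl, map_smul' := fun _ _ => rfl }
  have himage : restrict '' CUT k ⊆ CUT m := by
    rw [CUT, restrict.image_convexHull]
    refine convexHull_mono ?_
    rintro _ ⟨_, ⟨c, hc, rfl⟩, rfl⟩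
    exact ⟨c ∘ e, fun i => hc (e i), rfl⟩
  exact himage ⟨Y, hY, rfl⟩

def exactSubgraphFeasible (n k : ℕ) : Set (Matrix (Fin n) (Fin n) ℝ) :=
  {X | X ∈ XE n ∧ ∀ f : Fin k → Fin n, Function.Injective f → X.submatrix f f ∈ CUT k}

lemma zLevel_eq_sSup_image (n : ℕ) (L : Matrix (Fin n) (Fin n) ℝ) (k : ℕ) :
    zLevel n L k = sSup (frob L '' exactSubgraphFeasible n k) := by
  rw [zLevel]
  congr 1
  ext z
  simp [exactSubgraphFeasible, eq_comm, and_assoc]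

lemma ones_mem_exactSubgraphFeasible (n k : ℕ) :
    vecMulVec (fun _ => 1) (fun _ => 1) ∈ exactSubgraphFeasible n k := by
  refine ⟨⟨fun i => by simp [vecMulVec], ?_⟩, fun f _ => ?_⟩
  · simpa using posSemidef_vecMulVec_self_star (fun _ : Fin n => (1 : ℝ))
  · exact subset_convexHull ℝ _ ⟨fun _ => 1, fun _ => Or.inl rfl, rfl⟩

lemma bddAbove_frob_image_exactSubgraphFeasible (n : ℕ) (L : Matrix (Fin n) (Fin n) ℝ) (k : ℕ) :
    BddAbove (frob L '' exactSubgraphFeasible n k) := by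
  refine ⟨∑ i, ∑ j, |L i j|, ?_⟩
  rintro _ ⟨X, hX, rfl⟩
  exact frob_le_sum_abs_of_mem_XE L hX.1

lemma exists_notMem_range_of_card_lt {α β : Type*} [Fintype α] [Fintype β]
    (h : Fintype.card α < Fintype.card β) (g : α → β) : ∃ b, b ∉ Set.range g := by
  by_contra! hsurj
  exact (Fintype.card_le_of_surjective g hsurj).not_gt h

lemma exactSubgraphFeasible_succ_subset {n k : ℕ} (hk : k < n) :
    exactSubgraphFeasible n (k + 1) ⊆ exactSubgraphFeasible n k := by
  rintro X ⟨hXE, hcut⟩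
  refine ⟨hXE, fun g hg => ?_⟩
  obtain ⟨a, ha⟩ := exists_notMem_range_of_card_lt (by simpa using hk) g
  have hext := hcut _ (Fin.snoc_injective_of_injective hg ha)
  have hrestrict : (X.submatrix (Fin.snoc g a) (Fin.snoc g a)).submatrix Fin.castSucc
      Fin.castSucc = X.submatrix g g := by
    ext i j
    simp
  rw [← hrestrict]
  exact submatrix_mem_CUT _ hext

lemma zLevel_succ_le {n k : ℕ} (L : Matrix (Fin n) (Fin n) ℝ) (hk : k < n) :
    zLevel n L (k + 1) ≤ zLevel n L k := by
  rw [zLevel_eq_sSup_image, zLevel_eq_sSup_image]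
  exact csSup_le_csSup (bddAbove_frob_image_exactSubgraphFeasible n L k)
    (Set.Nonempty.image _ ⟨_, ones_mem_exactSubgraphFeasible n (k + 1)⟩)
    (Set.image_mono (exactSubgraphFeasible_succ_subset hk))

theorem esh_maxcut_monotone_general (n k : ℕ) (hkn : k ≤ n)
    (L : Matrix (Fin n) (Fin n) ℝ) :
    zLevel n L k ≤ zLevel n L (k - 1) := by
  cases k with
  | zero => exact le_rfl -- `0 - 1 = 0` in `ℕ`
  | succ k => exact zLevel_succ_le L hkn

theorem esh_maxcut_monotone (n k : ℕ) (hk2 : 2 ≤ k) (hkn : k ≤ n)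
    (L : Matrix (Fin n) (Fin n) ℝ) (hL : L.IsSymm) :
    zLevel n L k ≤ zLevel n L (k - 1) :=
  esh_maxcut_monotone_general n k hkn L

end
end

section
/- For every finite simple graph G on vertex set {1,…,n}, the Lovász theta function bounds the stability number: α(G) ≤ ϑ(G), where ϑ(G) = sup{trace(X) : X ∈ X^S(G)}. -/
/-
For a stable set `S` with indicator vector `v`, the rank-one matrix `v vᵀ` lies in the theta body
and has trace `|S|`. By the Schur complement of the corner `1`, the bordered matrix is positive
semidefinite iff `X ⪰ x xᵀ`; with `x = diag X` this forces `X i i ≥ (X i i)²`, so `X i i ≤ 1` and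
every trace in the theta body is at most `n`. This boundedness is what makes `sSup` the true
supremum rather than the junk value `0`.
-/

open Matrix BigOperators

noncomputable section

/-- Bordered matrix `[[t, xᵀ],[x, X]]` indexed by `Unit ⊕ Fin n`. -/
def border {n : ℕ} (t : ℝ) (x : Fin n → ℝ) (X : Matrix (Fin n) (Fin n) ℝ) :
    Matrix (Unit ⊕ Fin n) (Unit ⊕ Fin n) ℝ :=
  Matrix.fromBlocks (fun _ _ => t) (fun _ j => x j) (fun i _ => x i) X

/-- The theta body of `G`. -/
def thetaBody {n : ℕ} (G : SimpleGraph (Fin n)) : Set (Matrix (Fin n) (Fin n) ℝ) :=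
  {X | (∀ i j, G.Adj i j → X i j = 0) ∧ (border 1 X.diag X).PosSemidef}

/-- The stability (independence) number: largest cardinality of a stable set. -/
def indepNum {V : Type*} (G : SimpleGraph V) : ℕ :=
  sSup {k | ∃ S : Finset V, (∀ u ∈ S, ∀ v ∈ S, ¬ G.Adj u v) ∧ S.card = k}

lemma border_one_eq_fromBlocks {n : ℕ} (x : Fin n → ℝ) (X : Matrix (Fin n) (Fin n) ℝ) :
    border 1 x X = fromBlocks 1 (replicateRow Unit x) (replicateRow Unit x)ᴴ X := by
  ext (_ | i) (_ | j) <;> rfl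

theorem posSemidef_border_one_iff {n : ℕ} (x : Fin n → ℝ) (X : Matrix (Fin n) (Fin n) ℝ) :
    (border 1 x X).PosSemidef ↔ (X - vecMulVec x x).PosSemidef := by
  let : Invertible (1 : Matrix Unit Unit ℝ) := invertibleOne
  rw [border_one_eq_fromBlocks, PosDef.fromBlocks₁₁ _ _ PosDef.one, inv_one, Matrix.mul_one,
    conjTranspose_replicateRow, star_trivial, ← vecMulVec_eq]

lemma diag_le_one_of_mem_thetaBody {n : ℕ} {G : SimpleGraph (Fin n)} {X : Matrix (Fin n) (Fin n) ℝ}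
    (hX : X ∈ thetaBody G) (i : Fin n) : X i i ≤ 1 := by
  have h := ((posSemidef_border_one_iff _ _).1 hX.2).diag_nonneg (i := i)
  rw [Matrix.sub_apply, vecMulVec_apply, diag_apply, sub_nonneg] at h
  nlinarith

lemma trace_le_of_mem_thetaBody {n : ℕ} {G : SimpleGraph (Fin n)} {X : Matrix (Fin n) (Fin n) ℝ}
    (hX : X ∈ thetaBody G) : X.trace ≤ n :=
  calc X.trace = ∑ i, X i i := rfl
    _ ≤ ∑ _i : Fin n, 1 := Finset.sum_le_sum fun i _ => diag_le_one_of_mem_thetaBody hX i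
    _ = n := by simp

lemma bddAbove_trace_thetaBody {n : ℕ} (G : SimpleGraph (Fin n)) :
    BddAbove {z : ℝ | ∃ X ∈ thetaBody G, z = X.trace} := by
  refine ⟨n, ?_⟩
  rintro _ ⟨X, hX, rfl⟩
  exact trace_le_of_mem_thetaBody hX

lemma vecMulVec_indicator_mem_thetaBody {n : ℕ} {G : SimpleGraph (Fin n)} {S : Finset (Fin n)}
    (hS : ∀ u ∈ S, ∀ v ∈ S, ¬ G.Adj u v) :
    vecMulVec ((S : Set (Fin n)).indicator 1) ((S : Set (Fin n)).indicator 1) ∈ thetaBody G := by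
  set v : Fin n → ℝ := (S : Set (Fin n)).indicator 1
  have hvv : ∀ i, v i * v i = v i := fun i => by
    by_cases hi : i ∈ S <;> simp [v, hi]
  refine ⟨fun i j hij => ?_, ?_⟩
  · by_cases hi : i ∈ S
    · have hj : j ∉ S := fun hj => hS i hi j hj hij
      simp [v, vecMulVec_apply, hj]
    · simp [v, vecMulVec_apply, hi]
  · have hdiag : (vecMulVec v v).diag = v := funext hvv
    rw [posSemidef_border_one_iff, hdiag, sub_self]
    exact PosSemidef.zero

lemma trace_vecMulVec_indicator {ι : Type*} [Fintype ι] (S : Finset ι) :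
    (vecMulVec ((S : Set ι).indicator 1) ((S : Set ι).indicator 1)).trace
      = (S.card : ℝ) := by
  classical
  simp [dotProduct, Set.indicator_apply]

lemma exists_stable_card_eq_indepNum {V : Type*} [Finite V] (G : SimpleGraph V) :
    ∃ S : Finset V, (∀ u ∈ S, ∀ v ∈ S, ¬ G.Adj u v) ∧ S.card = indepNum G := by
  have := Fintype.ofFinite V
  show indepNum G ∈ {k | ∃ S : Finset V, (∀ u ∈ S, ∀ v ∈ S, ¬ G.Adj u v) ∧ S.card = k}
  refine Nat.sSup_mem ⟨0, ∅, by simp, rfl⟩ ⟨Fintype.card V, ?_⟩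
  rintro _ ⟨S, -, rfl⟩
  exact S.card_le_univ

/-- `α(G) ≤ ϑ(G)`, the Lovász theta function. -/
theorem indepNum_le_theta (n : ℕ) (G : SimpleGraph (Fin n)) :
    (indepNum G : ℝ) ≤ sSup {z : ℝ | ∃ X ∈ thetaBody G, z = X.trace} := by
  obtain ⟨S, hS, hcard⟩ := exists_stable_card_eq_indepNum G
  rw [← hcard]
  refine le_csSup (bddAbove_trace_thetaBody G) ?_
  exact ⟨_, vecMulVec_indicator_mem_thetaBody hS, (trace_vecMulVec_indicator S).symm⟩

end
end

section
/- For every finite simple graph G on vertex set {1,…,n}, the SDP value t*(G) = inf{t : [[t, 1^T],[1, X]] is positive semidefinite, all diagonal entries of X equal 1, and X_{ij} = 0 for all edges {i,j} of G} satisfies t*(G) ≤ χ(G), the chromatic number of G. -/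
/-! If the vertices are partitioned into `k` stable sets with 0/1 indicator vectors `s₁, …, s_k`,
then `X = ∑ sᵢ sᵢᵀ` has unit diagonal (every vertex lies in exactly one class) and vanishes on edges
(the classes are stable), while `[[k, 1ᵀ], [1, X]]` is the Gram matrix of the columns of `[1 | S]`
because `∑ sᵢ = 1`; so it is positive semidefinite and `t = k` is feasible. -/

open Matrix BigOperators

noncomputable section

/-- `s` is a 0/1 vector whose support is a stable set of `G`. -/
def isStableVec {n : ℕ} (G : SimpleGraph (Fin n)) (s : Fin n → ℝ) : Prop :=
  (∀ i, s i = 0 ∨ s i = 1) ∧ ∀ i j, G.Adj i j → s i * s j = 0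

/-- `s` lists the columns of a stable-set partition matrix of `G`. -/
def isSSPM {n k : ℕ} (G : SimpleGraph (Fin n)) (s : Fin k → Fin n → ℝ) : Prop :=
  (∀ i, isStableVec G (s i)) ∧ ∀ v, ∃! i, s i v = 1

/-- The chromatic number: smallest number of stable sets partitioning the vertex set. -/
def chrNum {n : ℕ} (G : SimpleGraph (Fin n)) : ℕ :=
  sInf {k | ∃ s : Fin k → Fin n → ℝ, isSSPM G s}

lemma border_posSemidef_nonneg {n : ℕ} {t : ℝ} {x : Fin n → ℝ} {X : Matrix (Fin n) (Fin n) ℝ}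
    (h : (border t x X).PosSemidef) : 0 ≤ t :=
  h.diag_nonneg (i := Sum.inl ())

lemma border_eq_transpose_mul_self {m : Type*} [Fintype m] {n : ℕ} (u : m → ℝ)
    (B : Matrix m (Fin n) ℝ) :
    border (u ⬝ᵥ u) (u ᵥ* B) (Bᵀ * B) =
      (fromCols (replicateCol Unit u) B)ᵀ * fromCols (replicateCol Unit u) B := by
  rw [transpose_fromCols, fromRows_mul_fromCols]
  unfold border
  congr 1
  ext
  simp [mul_apply, vecMul, dotProduct, mul_comm]

lemma border_posSemidef_gram {m : Type*} [Fintype m] {n : ℕ} (u : m → ℝ)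
    (B : Matrix m (Fin n) ℝ) : (border (u ⬝ᵥ u) (u ᵥ* B) (Bᵀ * B)).PosSemidef := by
  rw [border_eq_transpose_mul_self]
  exact posSemidef_conjTranspose_mul_self _

lemma isStableVec.mul_self {n : ℕ} {G : SimpleGraph (Fin n)} {s : Fin n → ℝ}
    (hs : isStableVec G s) (v : Fin n) : s v * s v = s v := by
  rcases hs.1 v with h | h <;> simp [h]

lemma isSSPM_singletons {n : ℕ} (G : SimpleGraph (Fin n)) :
    isSSPM G (fun i v => if v = i then 1 else 0) := by
  refine ⟨fun i => ⟨fun v => ?_, fun a b hab => ?_⟩, fun v => ⟨v, by simp, fun j => ?_⟩⟩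
  all_goals dsimp only
  · split_ifs <;> simp
  · split_ifs with ha hb <;> simp_all
  · split_ifs with h <;> simp [h]

lemma exists_isSSPM_chrNum {n : ℕ} (G : SimpleGraph (Fin n)) :
    ∃ s : Fin (chrNum G) → Fin n → ℝ, isSSPM G s :=
  Nat.sInf_mem (s := {k | ∃ s : Fin k → Fin n → ℝ, isSSPM G s}) ⟨n, _, isSSPM_singletons G⟩

namespace isSSPM

variable {n k : ℕ} {G : SimpleGraph (Fin n)} {s : Fin k → Fin n → ℝ}

lemma sum_eq_one (hs : isSSPM G s) (v : Fin n) : ∑ c, s c v = 1 := by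
  obtain ⟨c, hc, huniq⟩ := hs.2 v
  rw [Finset.sum_eq_single c _ (by simp), hc]
  intro b _ hb
  exact ((hs.1 b).1 v).resolve_right (mt (huniq b) hb)

lemma one_vecMul (hs : isSSPM G s) : 1 ᵥ* of s = 1 := by
  ext v
  simpa [vecMul, dotProduct] using hs.sum_eq_one v

lemma gram_diag (hs : isSSPM G s) (v : Fin n) : ((of s)ᵀ * of s) v v = 1 := by
  simp only [mul_apply, transpose_apply, of_apply, (hs.1 _).mul_self]
  exact hs.sum_eq_one v

lemma gram_eq_zero_of_adj (hs : isSSPM G s) {i j : Fin n} (hij : G.Adj i j) :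
    ((of s)ᵀ * of s) i j = 0 := by
  simp only [mul_apply, transpose_apply, of_apply]
  exact Finset.sum_eq_zero fun c _ => (hs.1 c).2 i j hij

end isSSPM

/-- The SDP value `t*(G)` is at most the chromatic number `χ(G)`. -/
theorem tstar_le_chromatic (n : ℕ) (G : SimpleGraph (Fin n)) :
    sInf {t : ℝ | ∃ X : Matrix (Fin n) (Fin n) ℝ,
        (border t (fun _ => 1) X).PosSemidef ∧ (∀ i, X i i = 1) ∧
        ∀ i j, G.Adj i j → X i j = 0}
      ≤ (chrNum G : ℝ) := by
  obtain ⟨s, hs⟩ := exists_isSSPM_chrNum G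
  refine csInf_le ⟨0, fun t ⟨X, hX, _⟩ => border_posSemidef_nonneg hX⟩
    ⟨(of s)ᵀ * of s, ?_, hs.gram_diag, fun i j => hs.gram_eq_zero_of_adj⟩
  have hgram := border_posSemidef_gram 1 (of s)
  rwa [hs.one_vecMul, one_dotProduct_one, Fintype.card_fin] at hgram

end
end

section
/- For every finite simple graph G on vertex set {1,…,n} and every k with 2 ≤ k ≤ n, the k-th level exact subgraph coloring bounds satisfy t^{k-1}(G) ≤ t^k(G) and t^n(G) ≤ χ(G), where t^k(G) = inf{t : [[t, 1^T],[1, X]] ∈ X^C and X_I ∈ COL(G_I) for every I ⊆ {1,…,n} with |I| = k}. -/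
open Matrix BigOperators

noncomputable section

/-- The Gram matrix `X = S Sᵀ` of the columns `s i`. -/
def gram {n k : ℕ} (s : Fin k → Fin n → ℝ) : Matrix (Fin n) (Fin n) ℝ :=
  Matrix.of fun a b => ∑ i, s i a * s i b

/-- `X` is a coloring matrix of `G`. -/
def isColoringMatrix {n : ℕ} (G : SimpleGraph (Fin n))
    (X : Matrix (Fin n) (Fin n) ℝ) : Prop :=
  ∃ k : ℕ, ∃ s : Fin k → Fin n → ℝ, isSSPM G s ∧ X = gram s

/-- `COL(G)`: convex hull of the coloring matrices of `G`. -/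
def COL {n : ℕ} (G : SimpleGraph (Fin n)) : Set (Matrix (Fin n) (Fin n) ℝ) :=
  convexHull ℝ {X | isColoringMatrix G X}

/-- The `k`-th level exact subgraph coloring bound: subsets of cardinality `k` are
represented by injective maps `f : Fin k → Fin n`. -/
def tLevel {n : ℕ} (G : SimpleGraph (Fin n)) (k : ℕ) : ℝ :=
  sInf {t : ℝ | ∃ X : Matrix (Fin n) (Fin n) ℝ,
    (border t (fun _ => 1) X).PosSemidef ∧ (∀ i, X i i = 1) ∧
    (∀ i j, G.Adj i j → X i j = 0) ∧
    ∀ f : Fin k → Fin n, Function.Injective f → X.submatrix f f ∈ COL (G.comap f)}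

/-!
Raising the level only adds constraints: restricting to a principal submatrix is linear and
sends coloring matrices of `G_I` to coloring matrices of `G_J` for `J ⊆ I`, so it maps
`COL(G_I)` into `COL(G_J)`, and every `(k-1)`-subset lies in some `k`-subset once `k ≤ n`.
For the bound by `χ(G)`, the coloring matrix `S Sᵀ` of an optimal SSPM is feasible with
`t = χ(G)`, because `[[χ(G), 1ᵀ], [1, S Sᵀ]]` is the Gram matrix of the vectors `(1, sᵢ)`.
Every feasible `t` is a diagonal entry of a positive semidefinite matrix, hence nonnegative, so
the feasible sets are bounded below and `sInf` is the true infimum rather than a junk value.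
-/

lemma isColoringMatrix_submatrix {p m : ℕ} {H : SimpleGraph (Fin p)}
    {Y : Matrix (Fin p) (Fin p) ℝ} (hY : isColoringMatrix H Y) (e : Fin m → Fin p) :
    isColoringMatrix (H.comap e) (Y.submatrix e e) := by
  obtain ⟨c, s, ⟨hstable, hcover⟩, rfl⟩ := hY
  refine ⟨c, fun i v => s i (e v), ⟨fun i => ⟨fun v => (hstable i).1 (e v),
    fun a b hab => (hstable i).2 _ _ hab⟩, fun v => hcover (e v)⟩, ?_⟩
  ext a b
  simp [_root_.gram]

lemma submatrix_mem_COL {p m : ℕ} {H : SimpleGraph (Fin p)} {Y : Matrix (Fin p) (Fin p) ℝ}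
    (hY : Y ∈ COL H) (e : Fin m → Fin p) :
    Y.submatrix e e ∈ COL (H.comap e) := by
  have hlin : IsLinearMap ℝ fun Z : Matrix (Fin p) (Fin p) ℝ => Z.submatrix e e :=
    ⟨fun _ _ => rfl, fun _ _ => rfl⟩
  have hmem := Set.mem_image_of_mem (fun Z => Z.submatrix e e) hY
  rw [COL, hlin.image_convexHull] at hmem
  refine convexHull_mono ?_ hmem
  rintro _ ⟨Z, hZ, rfl⟩
  exact isColoringMatrix_submatrix hZ e

lemma exists_injective_factorization {m k n : ℕ} {g : Fin m → Fin n} (hg : g.Injective)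
    (hmk : m ≤ k) (hkn : k ≤ n) :
    ∃ f : Fin k → Fin n, f.Injective ∧ ∃ e : Fin m → Fin k, f ∘ e = g := by
  classical
  obtain ⟨t, hgt, -, htk⟩ :=
    Finset.exists_subsuperset_card_eq (n := k) (Finset.subset_univ (Finset.univ.image g))
      (by rwa [Finset.card_image_of_injective _ hg, Finset.card_univ, Fintype.card_fin])
      (by rwa [Finset.card_univ, Fintype.card_fin])
  let σ : t ≃ Fin k := t.equivFinOfCardEq htk
  refine ⟨fun i => σ.symm i, Subtype.val_injective.comp σ.symm.injective,
    fun i => σ ⟨g i, hgt (Finset.mem_image_of_mem g (Finset.mem_univ i))⟩, ?_⟩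
  funext i
  simp

lemma isSSPM.sum_eq_one_s14 {n c : ℕ} {G : SimpleGraph (Fin n)} {s : Fin c → Fin n → ℝ}
    (hs : isSSPM G s) (v : Fin n) : ∑ i, s i v = 1 := by
  obtain ⟨i, hi, huniq⟩ := hs.2 v
  rw [Finset.sum_eq_single i (fun j _ hji => ((hs.1 j).1 v).resolve_right (hji ∘ huniq j))
    (by simp), hi]

lemma posSemidef_border_gram {n c : ℕ} (s : Fin c → Fin n → ℝ) :
    (border (c : ℝ) (fun v => ∑ i, s i v) (_root_.gram s)).PosSemidef := by
  let A : Matrix (Fin c) (Unit ⊕ Fin n) ℝ := Matrix.of fun i => Sum.elim (fun _ => 1) (s i)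
  have hA : border (c : ℝ) (fun v => ∑ i, s i v) (_root_.gram s) = Aᴴ * A := by
    ext (_ | a) (_ | b) <;> simp [A, border, Matrix.fromBlocks, _root_.gram, Matrix.mul_apply]
  rw [hA]
  exact Matrix.posSemidef_conjTranspose_mul_self A

lemma isSSPM.gram_diag_s14 {n c : ℕ} {G : SimpleGraph (Fin n)} {s : Fin c → Fin n → ℝ}
    (hs : isSSPM G s) (v : Fin n) : _root_.gram s v v = 1 := by
  have hidem : ∀ i, s i v * s i v = s i v := fun i => by
    rcases (hs.1 i).1 v with h | h <;> simp [h]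
  simp only [_root_.gram, Matrix.of_apply, hidem, hs.sum_eq_one_s14 v]

lemma isSSPM.gram_eq_zero_of_adj_s14 {n c : ℕ} {G : SimpleGraph (Fin n)} {s : Fin c → Fin n → ℝ}
    (hs : isSSPM G s) {a b : Fin n} (hab : G.Adj a b) : _root_.gram s a b = 0 :=
  Finset.sum_eq_zero (s := Finset.univ) fun i _ => (hs.1 i).2 a b hab

lemma exists_isSSPM {n : ℕ} (G : SimpleGraph (Fin n)) :
    ∃ s : Fin n → Fin n → ℝ, isSSPM G s := by
  refine ⟨fun i => Pi.single i 1, fun i => ⟨fun v => ?_, fun a b hab => ?_⟩, fun v => ?_⟩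
  · by_cases h : v = i <;> simp [h]
  · by_cases ha : a = i
    · subst ha
      simp [hab.ne.symm]
    · simp [Pi.single_apply, ha]
  · exact ⟨v, by simp, fun j hj => by by_contra h; simp [Ne.symm h] at hj⟩

def levelFeasible {n : ℕ} (G : SimpleGraph (Fin n)) (k : ℕ) : Set ℝ :=
  {t : ℝ | ∃ X : Matrix (Fin n) (Fin n) ℝ,
    (border t (fun _ => 1) X).PosSemidef ∧ (∀ i, X i i = 1) ∧
    (∀ i j, G.Adj i j → X i j = 0) ∧
    ∀ f : Fin k → Fin n, Function.Injective f → X.submatrix f f ∈ COL (G.comap f)}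

lemma tLevel_eq_sInf {n : ℕ} (G : SimpleGraph (Fin n)) (k : ℕ) :
    tLevel G k = sInf (levelFeasible G k) := rfl

lemma nonneg_of_mem_levelFeasible {n k : ℕ} {G : SimpleGraph (Fin n)} {t : ℝ}
    (ht : t ∈ levelFeasible G k) : 0 ≤ t := by
  obtain ⟨X, hpsd, -⟩ := ht
  simpa [border, Matrix.fromBlocks] using hpsd.diag_nonneg (i := Sum.inl ())

lemma bddBelow_levelFeasible {n : ℕ} (G : SimpleGraph (Fin n)) (k : ℕ) :
    BddBelow (levelFeasible G k) :=
  ⟨0, fun _ => nonneg_of_mem_levelFeasible⟩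

lemma natCast_mem_levelFeasible {n c : ℕ} {G : SimpleGraph (Fin n)} {s : Fin c → Fin n → ℝ}
    (hs : isSSPM G s) (k : ℕ) : (c : ℝ) ∈ levelFeasible G k := by
  refine ⟨_root_.gram s, ?_, hs.gram_diag_s14, fun a b => hs.gram_eq_zero_of_adj_s14, fun f _ => ?_⟩
  · simpa only [hs.sum_eq_one_s14] using posSemidef_border_gram s
  · exact submatrix_mem_COL (subset_convexHull ℝ _ ⟨c, s, hs, rfl⟩) f

lemma levelFeasible_anti {n m k : ℕ} (G : SimpleGraph (Fin n)) (hmk : m ≤ k) (hkn : k ≤ n) :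
    levelFeasible G k ⊆ levelFeasible G m := by
  rintro t ⟨X, hpsd, hdiag, hadj, hCOL⟩
  refine ⟨X, hpsd, hdiag, hadj, fun g hg => ?_⟩
  obtain ⟨f, hf, e, rfl⟩ := exists_injective_factorization hg hmk hkn
  exact submatrix_mem_COL (hCOL f hf) e

lemma tLevel_mono {n m k : ℕ} (G : SimpleGraph (Fin n)) (hmk : m ≤ k) (hkn : k ≤ n) :
    tLevel G m ≤ tLevel G k := by
  obtain ⟨s, hs⟩ := exists_isSSPM G
  rw [tLevel_eq_sInf, tLevel_eq_sInf]
  exact csInf_le_csInf (bddBelow_levelFeasible G m) ⟨_, natCast_mem_levelFeasible hs k⟩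
    (levelFeasible_anti G hmk hkn)

lemma tLevel_le_chrNum {n : ℕ} (G : SimpleGraph (Fin n)) (k : ℕ) : tLevel G k ≤ chrNum G := by
  obtain ⟨s, hs⟩ := exists_isSSPM_chrNum G
  rw [tLevel_eq_sInf]
  exact csInf_le (bddBelow_levelFeasible G k) (natCast_mem_levelFeasible hs k)

theorem esh_coloring_monotone_general (n k : ℕ) (hkn : k ≤ n)
    (G : SimpleGraph (Fin n)) :
    tLevel G (k - 1) ≤ tLevel G k ∧ tLevel G n ≤ (chrNum G : ℝ) :=
  ⟨tLevel_mono G (Nat.sub_le k 1) hkn, tLevel_le_chrNum G n⟩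

theorem esh_coloring_monotone (n k : ℕ) (hk2 : 2 ≤ k) (hkn : k ≤ n)
    (G : SimpleGraph (Fin n)) :
    tLevel G (k - 1) ≤ tLevel G k ∧ tLevel G n ≤ (chrNum G : ℝ) :=
  esh_coloring_monotone_general n k hkn G

end
end

section
/- For every integer t ≥ 1, the independence number of the two-dimensional torus graph satisfies α(T_{2t+1}) = t(2t+1) when the side length d = 2t+1 is odd, and α(T_{2t}) = 2t² when the side length d = 2t is even. -/
open BigOperators

noncomputable section

/-- The two-dimensional torus graph `T_d` on vertex set `(ℤ/dℤ) × (ℤ/dℤ)`: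
each vertex `(i,j)` is adjacent to `(i+1,j)` and `(i,j+1)` (indices mod `d`). -/
def torus (d : ℕ) : SimpleGraph (ZMod d × ZMod d) where
  Adj u v := u ≠ v ∧
    ((v.1 = u.1 + 1 ∧ v.2 = u.2) ∨ (v.1 = u.1 ∧ v.2 = u.2 + 1) ∨
     (u.1 = v.1 + 1 ∧ u.2 = v.2) ∨ (u.1 = v.1 ∧ u.2 = v.2 + 1))
  symm := by
    constructor
    intro u v h
    exact ⟨h.1.symm, by tauto⟩
  loopless := by
    constructor
    intro u h
    exact h.1 rfl

/-! Each row `{i} × ℤ/d` of `T_d` is a `d`-cycle. An independent set `B` of the cycle is disjoint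
from its translate `B + 1`, so `|B| ≤ ⌊d/2⌋`, and summing over rows gives `α(T_d) ≤ d⌊d/2⌋`.
Conversely, adjacent vertices of `T_d` have consecutive coordinate sums, so for any `A ⊆ ℤ/d`
without two consecutive residues (such as `0, 2, …, 2⌊d/2⌋ - 2`) the union of the diagonals
`{(i, j) | i + j ∈ A}` is an independent set with `d|A|` vertices. -/

open Finset Function

lemma indepNum_eq_simpleGraph_indepNum {V : Type*} (G : SimpleGraph V) :
    indepNum G = G.indepNum := by
  have hindep (S : Finset V) : (∀ u ∈ S, ∀ v ∈ S, ¬ G.Adj u v) ↔ G.IsIndepSet S :=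
    ⟨fun h u hu v hv _ => h u hu v hv, fun h u hu v hv huv => h hu hv huv.ne huv⟩
  simp only [indepNum, SimpleGraph.indepNum, hindep, SimpleGraph.isNIndepSet_iff]

lemma Finset.two_mul_card_le_of_mapsTo_compl {α : Type*} [Fintype α] [DecidableEq α]
    {f : α → α} (hf : Injective f) {s : Finset α} (hs : Set.MapsTo f s (↑s)ᶜ) :
    2 * #s ≤ Fintype.card α := by
  have hdisj : Disjoint s (s.image f) := by
    rw [disjoint_left]
    intro a ha hfa
    obtain ⟨b, hb, rfl⟩ := mem_image.1 hfa
    exact hs hb ha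
  calc 2 * #s = #(s ∪ s.image f) := by
        rw [card_union_of_disjoint hdisj, card_image_of_injective _ hf, two_mul]
    _ ≤ Fintype.card α := card_le_univ _

lemma ZMod.card_le_half_of_add_one_notMem {d : ℕ} [NeZero d] {s : Finset (ZMod d)}
    (hs : ∀ a ∈ s, a + 1 ∉ s) : #s ≤ d / 2 := by
  have := two_mul_card_le_of_mapsTo_compl (add_left_injective 1) hs
  rw [ZMod.card] at this
  omega

lemma ZMod.exists_card_eq_half_forall_add_one_notMem (d : ℕ) [NeZero d] :
    ∃ s : Finset (ZMod d), #s = d / 2 ∧ ∀ a ∈ s, a + 1 ∉ s := by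
  have hval {k : ℕ} (hk : k < d) : (k : ZMod d).val = k := ZMod.val_cast_of_lt hk
  refine ⟨(range (d / 2)).image fun k => ((2 * k : ℕ) : ZMod d), ?_, ?_⟩
  · rw [card_image_of_injOn, card_range]
    intro k hk l hl hkl
    simp only [coe_range, Set.mem_Iio] at hk hl
    have := congrArg ZMod.val hkl
    rw [hval (by omega), hval (by omega)] at this
    omega
  · simp only [mem_image, mem_range]
    rintro _ ⟨k, hk, rfl⟩ ⟨l, hl, hkl⟩
    have := congrArg ZMod.val hkl
    rw [← Nat.cast_add_one, hval (by omega), hval (by omega)] at this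
    omega

lemma card_filter_fst_add_snd_mem {G : Type*} [AddGroup G] [Fintype G] [DecidableEq G]
    (A : Finset G) : #{p : G × G | p.1 + p.2 ∈ A} = Fintype.card G * #A := by
  rw [← card_univ, ← card_product]
  exact card_equiv (Equiv.prodShear (Equiv.refl G) Equiv.addLeft) (by simp)

lemma card_eq_sum_card_filter_prodMk_mem {α β : Type*} [Fintype α] [Fintype β] [DecidableEq α]
    [DecidableEq β] (S : Finset (α × β)) : #S = ∑ i, #{j | (i, j) ∈ S} := by
  simp only [card_filter]
  rw [← Fintype.sum_prod_type fun p => if p ∈ S then 1 else 0, sum_boole, Nat.cast_id,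
    filter_mem_eq_inter, univ_inter]

section torus

variable {d : ℕ}

lemma torus_adj_mk_add_one [Nontrivial (ZMod d)] (i j : ZMod d) :
    (torus d).Adj (i, j) (i, j + 1) :=
  ⟨by simp, Or.inr (Or.inl ⟨rfl, rfl⟩)⟩

lemma fst_add_snd_eq_add_one_of_torus_adj {u v : ZMod d × ZMod d} (h : (torus d).Adj u v) :
    v.1 + v.2 = u.1 + u.2 + 1 ∨ u.1 + u.2 = v.1 + v.2 + 1 := by
  obtain ⟨-, ⟨h₁, h₂⟩ | ⟨h₁, h₂⟩ | ⟨h₁, h₂⟩ | ⟨h₁, h₂⟩⟩ := h <;>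
    simp only [h₁, h₂] <;> [left; left; right; right] <;> ring

lemma card_le_of_isIndepSet_torus [Fact (1 < d)] {S : Finset (ZMod d × ZMod d)}
    (hS : (torus d).IsIndepSet S) : #S ≤ d * (d / 2) := by
  have hrow (i : ZMod d) : #{j | (i, j) ∈ S} ≤ d / 2 := by
    refine ZMod.card_le_half_of_add_one_notMem fun j hj hj' => ?_
    simp only [mem_filter_univ] at hj hj'
    exact hS hj hj' (torus_adj_mk_add_one i j).ne (torus_adj_mk_add_one i j)
  calc #S = ∑ i, #{j | (i, j) ∈ S} := card_eq_sum_card_filter_prodMk_mem S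
    _ ≤ ∑ _i : ZMod d, d / 2 := sum_le_sum fun i _ => hrow i
    _ = d * (d / 2) := by simp

lemma isIndepSet_torus_filter_fst_add_snd_mem [NeZero d] {A : Finset (ZMod d)}
    (hA : ∀ a ∈ A, a + 1 ∉ A) :
    (torus d).IsIndepSet ↑({p | p.1 + p.2 ∈ A} : Finset (ZMod d × ZMod d)) := by
  intro u hu v hv _ huv
  rw [mem_coe, mem_filter_univ] at hu hv
  rcases fst_add_snd_eq_add_one_of_torus_adj huv with h | h
  · exact hA _ hu (h ▸ hv)
  · exact hA _ hv (h ▸ hu)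

end torus

theorem indepNum_torus_eq {d : ℕ} (hd : 2 ≤ d) : indepNum (torus d) = d * (d / 2) := by
  have : Fact (1 < d) := ⟨hd⟩
  rw [indepNum_eq_simpleGraph_indepNum]
  apply le_antisymm
  · obtain ⟨S, hS⟩ := (torus d).exists_isNIndepSet_indepNum
    exact hS.card_eq ▸ card_le_of_isIndepSet_torus hS.isIndepSet
  · obtain ⟨A, hAcard, hA⟩ := ZMod.exists_card_eq_half_forall_add_one_notMem d
    calc d * (d / 2) = #{p : ZMod d × ZMod d | p.1 + p.2 ∈ A} := by
          rw [card_filter_fst_add_snd_mem, ZMod.card, hAcard]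
      _ ≤ (torus d).indepNum := (isIndepSet_torus_filter_fst_add_snd_mem hA).card_le_indepNum

/-- The independence number of the torus graph: `α(T_{2t+1}) = t(2t+1)` and
`α(T_{2t}) = 2t²`. -/
theorem indepNum_torus (t : ℕ) (ht : 1 ≤ t) :
    indepNum (torus (2 * t + 1)) = t * (2 * t + 1) ∧
    indepNum (torus (2 * t)) = 2 * t ^ 2 := by
  constructor
  · rw [indepNum_torus_eq (by omega), show (2 * t + 1) / 2 = t by omega, mul_comm]
  · rw [indepNum_torus_eq (by omega), show 2 * t / 2 = t by omega]
    ring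

end
end
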